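/- arXiv:1610.04203 — 2 statements merged into one kernel-verified Lean document; each statement's English description precedes it below -/
import Mathlib

section
/- In a homogeneous network (L_i = L, X_i = X, ρ_i = ρ for all i) with N ≥ 2 nodes that is sufficiently energy-constrained, i.e., N·ρ ≤ X + (N−1)·L, the optimal value of problem (P2) equals N·(N−1)·ρ/(X + (N−1)·L), and it is attained at the symmetric point β_i* = ρ/(X + (N−1)·L) and α_i* = (N−1)·β_i* for all i. -/
open Finset

/-- Feasibility for problem (P2) (homogeneous parameters `L`, `X`, `ρ`). -/
def P2Feasible (N : ℕ) (L X ρ : ℝ) (α β : Fin N → ℝ) : Prop :=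
  (∀ i, α i ∈ Set.Icc (0 : ℝ) 1) ∧ (∀ i, β i ∈ Set.Icc (0 : ℝ) 1) ∧
  (∀ i, α i * L + β i * X ≤ ρ) ∧
  (∀ i, α i + β i ≤ 1) ∧ (∑ i, β i ≤ 1) ∧
  (∀ i, α i ≤ ∑ j ∈ univ.erase i, β j)

/-!
Summing the oracle constraints `α_i ≤ Σ_{j≠i} β_j` gives `A ≤ (N-1)·B` for `A = Σ α_i`,
`B = Σ β_i`, and summing the energy constraints gives `A·L + B·X ≤ N·ρ`. The combination
`X·(A ≤ (N-1)·B) + (N-1)·(A·L + B·X ≤ N·ρ)` eliminates `B` and leaves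
`A·(X + (N-1)·L) ≤ N·(N-1)·ρ`. The symmetric point makes both summed constraints tight, and
the energy-constraint hypothesis `N·ρ ≤ X + (N-1)·L` is exactly what keeps `Σ β_i ≤ 1` there.
-/

theorem sum_sum_erase_univ {ι R : Type*} [Fintype ι] [DecidableEq ι] [CommRing R] (f : ι → R) :
    ∑ i, ∑ j ∈ univ.erase i, f j = ((Fintype.card ι : R) - 1) * ∑ j, f j := by
  simp only [sum_erase_eq_sub (mem_univ _), sum_sub_distrib, sum_const, card_univ, nsmul_eq_mul]
  ring

section P2Feasible

variable {N : ℕ} {L X ρ : ℝ} {α β : Fin N → ℝ}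

theorem P2Feasible.sum_le_mul_sum (h : P2Feasible N L X ρ α β) :
    ∑ i, α i ≤ ((N : ℝ) - 1) * ∑ i, β i := by
  calc ∑ i, α i ≤ ∑ i, ∑ j ∈ univ.erase i, β j := sum_le_sum fun i _ => h.2.2.2.2.2 i
    _ = ((N : ℝ) - 1) * ∑ i, β i := by rw [sum_sum_erase_univ, Fintype.card_fin]

theorem P2Feasible.sum_mul_add_sum_mul_le (h : P2Feasible N L X ρ α β) :
    (∑ i, α i) * L + (∑ i, β i) * X ≤ N * ρ := by
  simpa [sum_add_distrib, sum_mul] using sum_le_sum fun i (_ : i ∈ univ) => h.2.2.1 i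

theorem P2Feasible.sum_mul_le (h : P2Feasible N L X ρ α β) (hN : 1 ≤ N) (hX : 0 ≤ X) :
    (∑ i, α i) * (X + ((N : ℝ) - 1) * L) ≤ N * ((N : ℝ) - 1) * ρ := by
  have hN' : (0 : ℝ) ≤ (N : ℝ) - 1 := by
    rw [sub_nonneg]
    exact_mod_cast hN
  linear_combination X * h.sum_le_mul_sum + ((N : ℝ) - 1) * h.sum_mul_add_sum_mul_le

theorem p2Feasible_const {a b : ℝ} (ha : 0 ≤ a) (hb : 0 ≤ b) (hab : a + b ≤ 1)
    (henergy : a * L + b * X ≤ ρ) (hsum : N * b ≤ 1) (horacle : a ≤ ((N : ℝ) - 1) * b) :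
    P2Feasible N L X ρ (fun _ => a) (fun _ => b) := by
  refine ⟨fun _ => ⟨ha, by linarith⟩, fun _ => ⟨hb, by linarith⟩, fun _ => henergy,
    fun _ => hab, by simpa using hsum, fun i => ?_⟩
  rwa [sum_const, nsmul_eq_mul, cast_card_erase_of_mem (mem_univ i), card_univ, Fintype.card_fin]

end P2Feasible

/-- In a sufficiently energy-constrained homogeneous network
(`N·ρ ≤ X + (N−1)·L`), the optimal value of (P2) equals
`N·(N−1)·ρ/(X + (N−1)·L)`, attained at the symmetric point
`β_i* = ρ/(X + (N−1)·L)`, `α_i* = (N−1)·β_i*`. -/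
theorem homogeneous_oracle_groupput (N : ℕ) (hN : 2 ≤ N) (L X ρ : ℝ)
    (hL : 0 < L) (hX : 0 < X) (hρ : 0 < ρ)
    (hcon : (N : ℝ) * ρ ≤ X + ((N : ℝ) - 1) * L) :
    IsGreatest {v : ℝ | ∃ α β : Fin N → ℝ, P2Feasible N L X ρ α β ∧ v = ∑ i, α i}
        ((N : ℝ) * ((N : ℝ) - 1) * ρ / (X + ((N : ℝ) - 1) * L))
    ∧ P2Feasible N L X ρ
        (fun _ => ((N : ℝ) - 1) * (ρ / (X + ((N : ℝ) - 1) * L)))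
        (fun _ => ρ / (X + ((N : ℝ) - 1) * L))
    ∧ (∑ _i : Fin N, ((N : ℝ) - 1) * (ρ / (X + ((N : ℝ) - 1) * L)))
        = (N : ℝ) * ((N : ℝ) - 1) * ρ / (X + ((N : ℝ) - 1) * L) := by
  have hN1 : (1 : ℝ) ≤ (N : ℝ) - 1 := by
    rw [le_sub_iff_add_le]
    exact_mod_cast hN
  set D := X + ((N : ℝ) - 1) * L with hD_def
  have hD : 0 < D := by positivity
  have hbD : ρ / D * D = ρ := div_mul_cancel₀ ρ hD.ne'
  have hNb : (N : ℝ) * (ρ / D) ≤ 1 := by rwa [mul_div_assoc', div_le_one hD]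
  have hfeas : P2Feasible N L X ρ (fun _ => ((N : ℝ) - 1) * (ρ / D)) (fun _ => ρ / D) :=
    p2Feasible_const (by positivity) (by positivity) (by linarith)
      (le_of_eq (by linear_combination hbD - ρ / D * hD_def)) hNb le_rfl
  have hsum : ∑ _i : Fin N, ((N : ℝ) - 1) * (ρ / D) = N * ((N : ℝ) - 1) * ρ / D := by
    simp only [sum_const, card_univ, Fintype.card_fin, nsmul_eq_mul]
    ring
  refine ⟨⟨⟨_, _, hfeas, hsum.symm⟩, ?_⟩, hfeas, hsum⟩
  rintro _ ⟨α, β, h, rfl⟩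
  rw [le_div_iff₀ hD]
  exact h.sum_mul_le (by omega) hX.le
end

section
/- In a homogeneous network (L_i = L, X_i = X, ρ_i = ρ for all i) with N ≥ 2 nodes that is sufficiently energy-constrained, i.e., N·ρ ≤ X + L, the optimal value of problem (P3) equals N·ρ/(X + L), and it is attained at the symmetric point α_i* = β_i* = ρ/(X + L) for all i with χ_{i,j} = β*/(N−1) for all i ≠ j. -/
/-! Summing `β i ≤ ∑_j χ i j` over senders and `α j = ∑_i χ i j` over receivers counts the
same flows, so the total transmit time is at most the total listen time. Adding up the power
budgets then gives `(X + L) ∑ β ≤ N ρ`. The symmetric point `α = β = ρ / (X + L)`, with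
flows spread evenly over the `N - 1` other nodes, meets every budget with equality,
and `N ρ ≤ X + L` is exactly what keeps `∑ β ≤ 1` and `α + β ≤ 1`. -/

open Finset

/-- Feasibility for problem (P3) (homogeneous parameters `L`, `X`, `ρ`). -/
def P3Feasible (N : ℕ) (L X ρ : ℝ) (α β : Fin N → ℝ) (χ : Fin N → Fin N → ℝ) : Prop :=
  (∀ i, α i ∈ Set.Icc (0 : ℝ) 1) ∧ (∀ i, β i ∈ Set.Icc (0 : ℝ) 1) ∧
  (∀ i j, i ≠ j → 0 ≤ χ i j) ∧
  (∀ i, α i * L + β i * X ≤ ρ) ∧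
  (∀ i, α i + β i ≤ 1) ∧ (∑ i, β i ≤ 1) ∧
  (∀ i, β i ≤ ∑ j ∈ univ.erase i, χ i j) ∧
  (∀ j, α j = ∑ i ∈ univ.erase j, χ i j)

theorem sum_sum_erase_comm {ι M : Type*} [Fintype ι] [DecidableEq ι] [AddCommGroup M]
    (χ : ι → ι → M) :
    ∑ i, ∑ j ∈ univ.erase i, χ i j = ∑ j, ∑ i ∈ univ.erase j, χ i j := by
  simp only [sum_erase_eq_sub (mem_univ _), sum_sub_distrib]
  rw [sum_comm]

theorem sum_erase_const_fin {N : ℕ} (i : Fin N) (c : ℝ) :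
    ∑ _j ∈ univ.erase i, c = ((N : ℝ) - 1) * c := by
  rw [sum_const, card_erase_of_mem (mem_univ i), card_univ, Fintype.card_fin, nsmul_eq_mul,
    Nat.cast_pred (Fin.pos i)]

namespace P3Feasible

variable {N : ℕ} {L X ρ : ℝ} {α β : Fin N → ℝ} {χ : Fin N → Fin N → ℝ}

theorem sum_beta_le_sum_alpha (h : P3Feasible N L X ρ α β χ) : ∑ i, β i ≤ ∑ i, α i :=
  calc ∑ i, β i ≤ ∑ i, ∑ j ∈ univ.erase i, χ i j := sum_le_sum fun i _ => h.2.2.2.2.2.2.1 i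
    _ = ∑ j, ∑ i ∈ univ.erase j, χ i j := sum_sum_erase_comm χ
    _ = ∑ j, α j := sum_congr rfl fun j _ => (h.2.2.2.2.2.2.2 j).symm

theorem sum_power_le (h : P3Feasible N L X ρ α β χ) :
    (∑ i, α i) * L + (∑ i, β i) * X ≤ N * ρ := by
  have := sum_le_sum fun i (_ : i ∈ univ) => h.2.2.2.1 i
  simpa [sum_add_distrib, ← sum_mul] using this

theorem sum_beta_mul_le (h : P3Feasible N L X ρ α β χ) (hL : 0 ≤ L) :
    (∑ i, β i) * (X + L) ≤ N * ρ := by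
  nlinarith [h.sum_beta_le_sum_alpha, h.sum_power_le]

theorem const (hN : 2 ≤ N) {b : ℝ} (hb : 0 ≤ b) (hpow : b * L + b * X ≤ ρ)
    (htime : b + b ≤ 1) (hsum : N * b ≤ 1) :
    P3Feasible N L X ρ (fun _ => b) (fun _ => b) (fun _ _ => b / ((N : ℝ) - 1)) := by
  have hN1 : (0 : ℝ) < (N : ℝ) - 1 := by
    have : (2 : ℝ) ≤ N := by exact_mod_cast hN
    linarith
  have hflow (i : Fin N) : ∑ _j ∈ univ.erase i, b / ((N : ℝ) - 1) = b := by
    rw [sum_erase_const_fin, mul_div_cancel₀ _ hN1.ne']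
  refine ⟨fun _ => ⟨hb, by linarith⟩, fun _ => ⟨hb, by linarith⟩,
    fun _ _ _ => div_nonneg hb hN1.le, fun _ => hpow, fun _ => htime, ?_,
    fun i => (hflow i).ge, fun j => (hflow j).symm⟩
  simpa using hsum

end P3Feasible

theorem homogeneous_oracle_anyput_general (N : ℕ) (hN : 2 ≤ N) (L X ρ : ℝ)
    (hL : 0 < L) (hρ : 0 < ρ)
    (hcon : (N : ℝ) * ρ ≤ X + L) :
    IsGreatest {v : ℝ | ∃ α β : Fin N → ℝ, ∃ χ : Fin N → Fin N → ℝ,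
        P3Feasible N L X ρ α β χ ∧ v = ∑ i, β i}
        ((N : ℝ) * ρ / (X + L))
    ∧ P3Feasible N L X ρ
        (fun _ => ρ / (X + L)) (fun _ => ρ / (X + L))
        (fun _ _ => (ρ / (X + L)) / ((N : ℝ) - 1))
    ∧ (∑ _i : Fin N, ρ / (X + L)) = (N : ℝ) * ρ / (X + L) := by
  have hN2 : (2 : ℝ) ≤ N := by exact_mod_cast hN
  have hXL : 0 < X + L := lt_of_lt_of_le (by positivity) hcon
  have hsum : ∑ _i : Fin N, ρ / (X + L) = N * ρ / (X + L) := by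
    simp [mul_div_assoc]
  have hfeas : P3Feasible N L X ρ (fun _ => ρ / (X + L)) (fun _ => ρ / (X + L))
      (fun _ _ => ρ / (X + L) / ((N : ℝ) - 1)) := by
    refine P3Feasible.const hN (by positivity) ?_ ?_ ?_
    · rw [← mul_add, add_comm L, div_mul_cancel₀ _ hXL.ne']
    · rw [← add_div, div_le_one hXL]; nlinarith
    · rw [← mul_div_assoc, div_le_one hXL]; exact hcon
  refine ⟨⟨⟨_, _, _, hfeas, hsum.symm⟩, ?_⟩, hfeas, hsum⟩
  rintro v ⟨α, β, χ, h, rfl⟩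
  rw [le_div_iff₀ hXL]
  exact h.sum_beta_mul_le hL.le

/-- In a sufficiently energy-constrained homogeneous network
(`N·ρ ≤ X + L`), the optimal value of (P3) equals `N·ρ/(X + L)`, attained at the
symmetric point `α_i* = β_i* = ρ/(X + L)` with `χ_{i,j} = β*/(N−1)` for `i ≠ j`. -/
theorem homogeneous_oracle_anyput (N : ℕ) (hN : 2 ≤ N) (L X ρ : ℝ)
    (hL : 0 < L) (hX : 0 < X) (hρ : 0 < ρ)
    (hcon : (N : ℝ) * ρ ≤ X + L) :
    IsGreatest {v : ℝ | ∃ α β : Fin N → ℝ, ∃ χ : Fin N → Fin N → ℝ,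
        P3Feasible N L X ρ α β χ ∧ v = ∑ i, β i}
        ((N : ℝ) * ρ / (X + L))
    ∧ P3Feasible N L X ρ
        (fun _ => ρ / (X + L)) (fun _ => ρ / (X + L))
        (fun _ _ => (ρ / (X + L)) / ((N : ℝ) - 1))
    ∧ (∑ _i : Fin N, ρ / (X + L)) = (N : ℝ) * ρ / (X + L) :=
  homogeneous_oracle_anyput_general N hN L X ρ hL hρ hcon
end
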